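/- arXiv:math/9910028 — 2 statements merged into one kernel-verified Lean document; each statement's English description precedes it below -/
import Mathlib

section
/- Let V = ⊕_{d∈ℕ} V_d be a graded vector space over a field K of characteristic zero, with each V_d finite-dimensional and V_d = 0 for all but finitely many d, set b_d = dim V_d, and let m ∈ ℕ. For n ∈ ℕ define the graded vector space F_n(V,m) = ⊕_N ⊗_{l≥1} S^{N_l}(V[m(l-1)]), the sum over all finitely supported functions N : {1,2,3,…} → ℕ with ∑_l l·N_l = n. Then in ℤ[[t,q]] one has ∑_{n≥0} p_t(F_n(V,m)) q^n = ∏_{l≥1} [ ∏_{d odd} (1 + t^d q^l)^{b_{d - m(l-1)}} / ∏_{d even} (1 - t^d q^l)^{b_{d - m(l-1)}} ], where b_{d-m(l-1)} = 0 when d < m(l-1). (For V = H^*(X) of a closed 2m-dimensional manifold X, F_n(V,m) is the delocalized equivariant cohomology H^*(X^n,S_n) with the physicists' shifted grading, so this computes its Poincaré polynomials.) -/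
/-!
STATEMENT 4.  A graded vector space `V` over a field of characteristic zero
with finite-dimensional components, almost all zero, is recorded by its
dimension function `b : ℕ →₀ ℕ`, `b d = dim V_d`; let `m : ℕ`.

For `n : ℕ` we consider `F_n(V,m) = ⊕_N ⊗_{l≥1} S^{N_l}(V[m(l-1)])`, the sum
over finitely supported `N : {1,2,…} → ℕ` with `∑_l l·N_l = n`, where `S` is
the graded symmetric power and `V[j]` the shift (`V[j]_d = V_{d-j}`), tensor
products being graded by total degree.  A basis of `F_n(V,m)` is given by the
finitely supported multiplicity functions `M` on `{1,2,…} × (basis of V)`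
(a pair `(l, v)` indexes the basis vector `v` of the `l`-th factor `V[m(l-1)]`,
of degree `deg v + m(l-1)`) such that pairs of odd degree get multiplicity
`≤ 1`, and `∑ l·M(l,v) = n`; the degree of such an `M` is
`∑ M(l,v)·(deg v + m(l-1))`.  `fDim b m n e` below is the number of such `M`
of degree `e`, i.e. `dim F_n(V,m)_e`; in the encoding the first component
`v.1 : ℕ` of an index stands for `l - 1`.

The theorem states, in `ℤ[[t,q]]` (`t = X 0`, `q = X 1`), the identity
`∑_{n≥0} p_t(F_n(V,m)) q^n
  = ∏_{l≥1} [∏_{d odd} (1+t^d q^l)^{b_{d-m(l-1)}} / ∏_{d even} (1-t^d q^l)^{b_{d-m(l-1)}}]`,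
with `b_{d-m(l-1)} = 0` for `d < m(l-1)`.  The infinite product over `l ≥ 1`
converges `q`-adically (its `l`-th factor is `≡ 1 mod q^l`), so the identity is
expressed coefficientwise: the coefficient at any exponent `E` of the left-hand
side equals the corresponding coefficient of the (finite) product of the
factors with `1 ≤ l ≤ E(q)`, the omitted factors not affecting it.  Divisions
are by units of `ℤ[[t,q]]`, interpreted via `Ring.inverse`.
-/

open PowerSeries Finset

/-- Dimension function of the shifted graded vector space `V[j]`. -/
noncomputable def shiftF (b : ℕ →₀ ℕ) (j : ℕ) : ℕ →₀ ℕ :=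
  Finsupp.embDomain (addRightEmbedding j) b

/-- `fDim b m n e` is the dimension of the degree-`e` component of
`F_n(V,m) = ⊕_{∑ l N_l = n} ⊗_{l≥1} S^{N_l}(V[m(l-1)])` where `dim V_d = b d`. -/
noncomputable def fDim (b : ℕ →₀ ℕ) (m n e : ℕ) : ℕ :=
  Nat.card {M : (ℕ × Σ d : ℕ, Fin (b d)) →₀ ℕ //
    (∀ v, Odd (v.2.1 + m * v.1) → M v ≤ 1) ∧
      (M.sum fun v k => (v.1 + 1) * k) = n ∧
      (M.sum fun v k => k * (v.2.1 + m * v.1)) = e}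

/-- The `l`-th factor `∏_{d odd} (1+t^d q^l)^{b_{d-m(l-1)}} / ∏_{d even} (1-t^d q^l)^{b_{d-m(l-1)}}`
of the right-hand side. -/
noncomputable def rhsFactor (b : ℕ →₀ ℕ) (m l : ℕ) : MvPowerSeries (Fin 2) ℤ :=
  (∏ d ∈ (shiftF b (m * (l - 1))).support.filter (fun d => Odd d),
      (1 + (MvPowerSeries.X 0 : MvPowerSeries (Fin 2) ℤ) ^ d * MvPowerSeries.X 1 ^ l)
        ^ (shiftF b (m * (l - 1)) d)) *
    Ring.inverse (∏ d ∈ (shiftF b (m * (l - 1))).support.filter (fun d => Even d),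
      (1 - (MvPowerSeries.X 0 : MvPowerSeries (Fin 2) ℤ) ^ d * MvPowerSeries.X 1 ^ l)
        ^ (shiftF b (m * (l - 1)) d))

/-!
Give `V` a homogeneous basis and the `l`-th factor `V[m(l-1)]` the copy of that basis with
degrees shifted by `m(l-1)`.  A basis vector `v` of degree `D` in the `l`-th factor contributes
the factor `1 + t^D q^l` (odd `D`, exterior algebra) or `1/(1 - t^D q^l) = ∑_k t^{kD} q^{kl}`
(even `D`, polynomial algebra) to the product, so the `t^e q^n`-coefficient of the product over
all pairs `(l, v)` with `l ≤ n` counts exactly the multiplicity functions `M` defining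
`fDim b m n e`: choose `M (l, v) = k` in the factor of `(l, v)`.
-/

namespace MvPowerSeries

variable {σ ι R : Type*}

open scoped Classical in
/-- `∑_{k : p k} X^{k • w}`. -/
noncomputable def multiplesSeries [Semiring R] (w : σ →₀ ℕ) (p : ℕ → Prop) :
    MvPowerSeries σ R :=
  fun u => if ∃ k, p k ∧ u = k • w then 1 else 0

open scoped Classical in
theorem coeff_multiplesSeries [Semiring R] (w u : σ →₀ ℕ) (p : ℕ → Prop) :
    coeff u (multiplesSeries (R := R) w p) = if ∃ k, p k ∧ u = k • w then 1 else 0 :=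
  rfl

theorem one_add_monomial_eq_multiplesSeries [Semiring R] {w : σ →₀ ℕ} (hw : w ≠ 0) :
    1 + monomial w (1 : R) = multiplesSeries w (· ≤ 1) := by
  classical
  ext u
  rw [coeff_multiplesSeries, map_add, coeff_one, coeff_monomial]
  by_cases hu0 : u = 0
  · subst hu0
    have h0 : ∃ k, k ≤ 1 ∧ (0 : σ →₀ ℕ) = k • w := ⟨0, zero_le_one, (zero_smul ℕ w).symm⟩
    rw [if_pos h0, if_pos rfl, if_neg (Ne.symm hw), add_zero]
  by_cases huw : u = w
  · subst huw
    have h1 : ∃ k, k ≤ 1 ∧ u = k • u := ⟨1, le_rfl, (one_smul ℕ u).symm⟩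
    rw [if_pos h1, if_pos rfl, if_neg hu0, zero_add]
  have hk : ¬ ∃ k, k ≤ 1 ∧ u = k • w := by
    rintro ⟨k, hk, rfl⟩
    interval_cases k <;> simp_all
  rw [if_neg hu0, if_neg huw, if_neg hk, add_zero]

theorem one_sub_monomial_mul_multiplesSeries [Ring R] {w : σ →₀ ℕ} (hw : w ≠ 0) :
    (1 - monomial w (1 : R)) * multiplesSeries w (fun _ => True) = 1 := by
  classical
  ext u
  rw [sub_mul, one_mul, map_sub, coeff_monomial_mul, coeff_one, coeff_multiplesSeries,
    coeff_multiplesSeries, one_mul]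
  simp only [true_and]
  by_cases hu0 : u = 0
  · subst hu0
    have hw0 : ¬ w ≤ 0 := fun h => hw (le_antisymm h bot_le)
    have h0 : ∃ k : ℕ, (0 : σ →₀ ℕ) = k • w := ⟨0, (zero_smul ℕ w).symm⟩
    rw [if_neg hw0, if_pos h0, if_pos rfl, sub_zero]
  have hshift : (∃ k : ℕ, u = k • w) ↔ w ≤ u ∧ ∃ k : ℕ, u - w = k • w := by
    constructor
    · rintro ⟨_ | k, rfl⟩
      · exact absurd (zero_smul ℕ w) hu0
      · rw [succ_nsmul', add_tsub_cancel_left]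
        exact ⟨le_self_add, k, rfl⟩
    · rintro ⟨hwu, k, hk⟩
      exact ⟨k + 1, by rw [succ_nsmul', ← hk, add_tsub_cancel_of_le hwu]⟩
  by_cases hm : ∃ k : ℕ, u = k • w
  · obtain ⟨hwu, hk⟩ := hshift.mp hm
    simp [hu0, hm, hwu, hk]
  · have : ¬ (w ≤ u ∧ ∃ k : ℕ, u - w = k • w) := hshift.not.mp hm
    by_cases hwu : w ≤ u <;> simp_all

open scoped Classical in
theorem card_filter_finsuppAntidiag_multiples (s : Finset ι) {w : ι → σ →₀ ℕ}
    (hw : ∀ i ∈ s, w i ≠ 0) (p : ι → ℕ → Prop) (E : σ →₀ ℕ) :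
    #{φ ∈ s.finsuppAntidiag E | ∀ i ∈ s, ∃ k, p i k ∧ φ i = k • w i} =
      Nat.card {k : ι →₀ ℕ //
        k.support ⊆ s ∧ (∀ i ∈ s, p i (k i)) ∧ (k.sum fun i n => n • w i) = E} := by
  rw [← Nat.card_eq_finsetCard]
  symm
  let f : {k : ι →₀ ℕ //
      k.support ⊆ s ∧ (∀ i ∈ s, p i (k i)) ∧ (k.sum fun i n => n • w i) = E} →
      {φ // φ ∈ {φ ∈ s.finsuppAntidiag E | ∀ i ∈ s, ∃ k, p i k ∧ φ i = k • w i}} :=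
    fun k => ⟨Finsupp.onFinset k.1.support (fun i => k.1 i • w i)
      (fun i h => Finsupp.mem_support_iff.mpr fun h0 => h (by rw [h0, zero_smul])), by
      obtain ⟨hks, hkp, hkE⟩ := k.2
      refine mem_filter.mpr
        ⟨mem_finsuppAntidiag.mpr ⟨?_, Finsupp.support_onFinset_subset.trans hks⟩,
          fun i hi => ⟨k.1 i, hkp i hi, Finsupp.onFinset_apply⟩⟩
      rwa [Finsupp.sum_of_support_subset _ hks _ fun i _ => zero_smul ℕ (w i)] at hkE⟩
  refine Nat.card_eq_of_bijective f ⟨fun k k' hkk' => ?_, fun φ => ?_⟩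
  · ext i
    have hi : k.1 i • w i = k'.1 i • w i := by
      simpa [f] using congrArg (fun φ => φ.1 i) hkk'
    by_cases his : i ∈ s
    · exact (nsmul_left_strictMono (pos_iff_ne_zero.mpr (hw i his))).injective hi
    · rw [Finsupp.notMem_support_iff.mp fun h => his (k.2.1 h),
        Finsupp.notMem_support_iff.mp fun h => his (k'.2.1 h)]
  · obtain ⟨hφE, hφw⟩ := mem_filter.mp φ.2
    obtain ⟨hφsum, hφs⟩ := mem_finsuppAntidiag.mp hφE
    choose κ hκp hκφ using hφw
    have hφ : ∀ i, φ.1 i = Finsupp.indicator s κ i • w i := by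
      intro i
      by_cases his : i ∈ s
      · rw [Finsupp.indicator_of_mem his, hκφ i his]
      · rw [Finsupp.indicator_of_notMem his, zero_smul,
          Finsupp.notMem_support_iff.mp fun h => his (hφs h)]
    have hks := Finsupp.support_indicator_subset s κ
    refine ⟨⟨Finsupp.indicator s κ, hks, fun i hi => ?_, ?_⟩, ?_⟩
    · rw [Finsupp.indicator_of_mem hi]
      exact hκp i hi
    · rw [Finsupp.sum_of_support_subset _ hks _ fun i _ => zero_smul ℕ (w i), ← hφsum]
      exact sum_congr rfl fun i _ => (hφ i).symm
    · ext1
      ext1 i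
      exact (hφ i).symm

theorem coeff_prod_multiplesSeries [CommSemiring R] (s : Finset ι) {w : ι → σ →₀ ℕ}
    (hw : ∀ i ∈ s, w i ≠ 0) (p : ι → ℕ → Prop) (E : σ →₀ ℕ) :
    coeff E (∏ i ∈ s, multiplesSeries (R := R) (w i) (p i)) =
      Nat.card {k : ι →₀ ℕ //
        k.support ⊆ s ∧ (∀ i ∈ s, p i (k i)) ∧ (k.sum fun i n => n • w i) = E} := by
  classical
  rw [coeff_prod, ← card_filter_finsuppAntidiag_multiples s hw, ← sum_boole]
  refine sum_congr rfl fun φ _ => ?_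
  simp only [coeff_multiplesSeries]
  convert prod_boole

end MvPowerSeries

noncomputable def bidegree (D l : ℕ) : Fin 2 →₀ ℕ :=
  Finsupp.single 0 D + Finsupp.single 1 l

@[simp] theorem bidegree_apply_zero (D l : ℕ) : bidegree D l 0 = D := by simp [bidegree]

@[simp] theorem bidegree_apply_one (D l : ℕ) : bidegree D l 1 = l := by simp [bidegree]

theorem bidegree_eq_zero_iff {D l : ℕ} : bidegree D l = 0 ↔ D = 0 ∧ l = 0 := by
  simp [Finsupp.ext_iff, Fin.forall_fin_two]

theorem X_pow_mul_X_pow_eq_monomial_bidegree (D l : ℕ) :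
    (MvPowerSeries.X 0 : MvPowerSeries (Fin 2) ℤ) ^ D * MvPowerSeries.X 1 ^ l =
      MvPowerSeries.monomial (bidegree D l) 1 := by
  rw [MvPowerSeries.X_pow_eq, MvPowerSeries.X_pow_eq, MvPowerSeries.monomial_mul_monomial,
    one_mul, bidegree]

/-- Poincaré series `1 + t^D q^l` (odd `D`) or `1/(1 - t^D q^l)` (even `D`) of the graded
symmetric algebra on one generator of degree `D`, counted with weight `q^l`. -/
noncomputable def symAlgSeries (D l : ℕ) : MvPowerSeries (Fin 2) ℤ :=
  MvPowerSeries.multiplesSeries (bidegree D l) (fun k => Odd D → k ≤ 1)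

theorem symAlgSeries_of_odd {D : ℕ} (hD : Odd D) (l : ℕ) :
    symAlgSeries D l = 1 + MvPowerSeries.X 0 ^ D * MvPowerSeries.X 1 ^ l := by
  have hw : bidegree D l ≠ 0 := fun h => hD.pos.ne' (bidegree_eq_zero_iff.mp h).1
  simp only [symAlgSeries, hD, true_imp_iff, X_pow_mul_X_pow_eq_monomial_bidegree,
    MvPowerSeries.one_add_monomial_eq_multiplesSeries hw]

theorem one_sub_mul_symAlgSeries_of_even {D l : ℕ} (hD : Even D) (hl : l ≠ 0) :
    (1 - MvPowerSeries.X 0 ^ D * MvPowerSeries.X 1 ^ l) * symAlgSeries D l = 1 := by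
  have hw : bidegree D l ≠ 0 := fun h => hl (bidegree_eq_zero_iff.mp h).2
  simp only [symAlgSeries, Nat.not_odd_iff_even.mpr hD, false_imp_iff,
    X_pow_mul_X_pow_eq_monomial_bidegree, MvPowerSeries.one_sub_monomial_mul_multiplesSeries hw]

theorem Ring.inverse_eq_of_mul_eq_one {M₀ : Type*} [CommMonoidWithZero M₀] {a b : M₀}
    (h : a * b = 1) : Ring.inverse a = b := by
  simpa only [mul_one] using
    (Ring.inverse_mul_eq_iff_eq_mul a 1 b (IsUnit.of_mul_eq_one b h)).mpr h.symm

theorem ringInverse_prod_one_sub_pow {s : Finset ℕ} (hs : ∀ d ∈ s, Even d) (c : ℕ → ℕ)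
    {l : ℕ} (hl : l ≠ 0) :
    Ring.inverse (∏ d ∈ s,
        (1 - (MvPowerSeries.X 0 : MvPowerSeries (Fin 2) ℤ) ^ d * MvPowerSeries.X 1 ^ l) ^ c d) =
      ∏ d ∈ s, symAlgSeries d l ^ c d := by
  refine Ring.inverse_eq_of_mul_eq_one ?_
  rw [← prod_mul_distrib]
  exact prod_eq_one fun d hd => by
    rw [← mul_pow, one_sub_mul_symAlgSeries_of_even (hs d hd) hl, one_pow]

theorem rhsFactor_eq_prod (b : ℕ →₀ ℕ) (m : ℕ) {l : ℕ} (hl : l ≠ 0) :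
    rhsFactor b m l = ∏ d ∈ b.support, symAlgSeries (d + m * (l - 1)) l ^ b d := by
  rw [rhsFactor, ringInverse_prod_one_sub_pow (fun d hd => (mem_filter.mp hd).2) _ hl,
    prod_congr rfl fun d hd => by rw [← symAlgSeries_of_odd (mem_filter.mp hd).2],
    filter_congr fun d _ => Nat.not_odd_iff_even.symm, prod_filter_mul_prod_filter_not,
    shiftF, Finsupp.support_embDomain, prod_map]
  exact prod_congr rfl fun d _ => by rw [Finsupp.embDomain_apply_self]; rfl

noncomputable def basisFinset (b : ℕ →₀ ℕ) : Finset (Σ d : ℕ, Fin (b d)) :=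
  b.support.sigma fun _ => univ

theorem mem_basisFinset {b : ℕ →₀ ℕ} (v : Σ d : ℕ, Fin (b d)) : v ∈ basisFinset b :=
  mem_sigma.mpr ⟨Finsupp.mem_support_iff.mpr v.2.pos.ne', mem_univ _⟩

theorem prod_basisFinset {M : Type*} [CommMonoid M] (b : ℕ →₀ ℕ) (f : ℕ → M) :
    ∏ v ∈ basisFinset b, f v.1 = ∏ d ∈ b.support, f d ^ b d := by
  simp [basisFinset, prod_sigma]

theorem prod_Icc_rhsFactor (b : ℕ →₀ ℕ) (m n : ℕ) :
    ∏ l ∈ Icc 1 n, rhsFactor b m l =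
      ∏ i ∈ range n ×ˢ basisFinset b, symAlgSeries (i.2.1 + m * i.1) (i.1 + 1) := by
  rw [prod_product, ← Ico_add_one_right_eq_Icc, prod_Ico_eq_prod_range, Nat.add_sub_cancel]
  refine prod_congr rfl fun l _ => ?_
  rw [add_comm 1 l, rhsFactor_eq_prod b m l.add_one_ne_zero, Nat.add_sub_cancel,
    ← prod_basisFinset b fun d => symAlgSeries (d + m * l) (l + 1)]

theorem sum_smul_bidegree_eq_iff {ι : Type*} (M : ι →₀ ℕ) (D L : ι → ℕ) (E : Fin 2 →₀ ℕ) :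
    (M.sum fun i k => k • bidegree (D i) (L i)) = E ↔
      (M.sum fun i k => L i * k) = E 1 ∧ (M.sum fun i k => k * D i) = E 0 := by
  simp only [Finsupp.ext_iff, Fin.forall_fin_two, Finsupp.sum_apply, Finsupp.smul_apply,
    bidegree_apply_zero, bidegree_apply_one, smul_eq_mul, mul_comm _ (L _)]
  exact and_comm

theorem fst_lt_of_mem_support {ι : Type*} {M : (ℕ × ι) →₀ ℕ} {n : ℕ}
    (hM : (M.sum fun i k => (i.1 + 1) * k) = n) {i : ℕ × ι} (hi : i ∈ M.support) : i.1 < n := by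
  have hle : (i.1 + 1) * M i ≤ n :=
    hM ▸ single_le_sum (f := fun i => (i.1 + 1) * M i) (fun _ _ => Nat.zero_le _) hi
  nlinarith [Nat.pos_of_ne_zero (Finsupp.mem_support_iff.mp hi)]

theorem fDim_eq_natCard (b : ℕ →₀ ℕ) (m : ℕ) (E : Fin 2 →₀ ℕ) :
    fDim b m (E 1) (E 0) = Nat.card {M : (ℕ × Σ d : ℕ, Fin (b d)) →₀ ℕ //
      M.support ⊆ range (E 1) ×ˢ basisFinset b ∧
        (∀ i ∈ range (E 1) ×ˢ basisFinset b, Odd (i.2.1 + m * i.1) → M i ≤ 1) ∧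
        (M.sum fun i k => k • bidegree (i.2.1 + m * i.1) (i.1 + 1)) = E} := by
  refine Nat.card_congr (Equiv.subtypeEquivRight fun M => ?_)
  rw [sum_smul_bidegree_eq_iff]
  constructor
  · rintro ⟨hodd, hn, he⟩
    exact ⟨fun i hi => mem_product.mpr ⟨mem_range.mpr (fst_lt_of_mem_support hn hi),
      mem_basisFinset _⟩, fun i _ => hodd i, hn, he⟩
  · rintro ⟨hs, hodd, hn, he⟩
    refine ⟨fun i hi => ?_, hn, he⟩
    by_cases h : i ∈ M.support
    · exact hodd i (hs h) hi
    · rw [Finsupp.notMem_support_iff.mp h]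
      exact zero_le_one

theorem poincare_series_delocalized_symmetric_product (b : ℕ →₀ ℕ) (m : ℕ)
    (E : Fin 2 →₀ ℕ) :
    (fDim b m (E 1) (E 0) : ℤ) =
      MvPowerSeries.coeff E (∏ l ∈ Finset.Icc 1 (E 1), rhsFactor b m l) := by
  simp only [prod_Icc_rhsFactor, fDim_eq_natCard, symAlgSeries]
  rw [MvPowerSeries.coeff_prod_multiplesSeries]
  exact fun i _ h => i.1.add_one_ne_zero (bidegree_eq_zero_iff.mp h).2
end

section
/- Let W = ⊕_{(s,t)∈ℕ×ℕ} W_{s,t} be a bigraded vector space over a field K of characteristic zero, with every W_{s,t} finite-dimensional and all but finitely many zero. Define χ_{-y}(U) = ∑_{s,t} (-1)^{s+t} h^{s,t}(U) y^s ∈ ℤ[y] for any such bigraded space U. Then in ℚ[[y,q]] one has ∑_{n≥0} χ_{-y}(S^n(W)) q^n = exp( ∑_{m≥1} χ_{-y^m}(W) q^m / m ), where χ_{-y^m}(W) is χ_{-y}(W) with y replaced by y^m. (For W = H^{*,*}(X) of a compact complex manifold X this is the generating function of the Hirzebruch χ_{-y}-genera of the symmetric products X^{(n)}.) -/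
/-!
STATEMENT 6.  A bigraded vector space `W` over a field of characteristic zero
with finite-dimensional components, almost all zero, is recorded by its
dimension function `h : ℕ × ℕ →₀ ℕ`, `h (s,t) = dim W_{s,t}`.  `sDim2 h n e`
is the dimension of the bidegree-`e` component of the `n`-th graded symmetric
power `S^n(W)` (counting multisets of size `n` of basis vectors with
odd-total-degree vectors occurring at most once, bidegrees adding).

For a bigraded space `U`, `χ_{-y}(U) = ∑_{s,t} (-1)^{s+t} h^{s,t}(U) y^s`.

The theorem states in `ℚ[[y,q]]`, modelled as `ℚ[[y]][[q]]`
(`PowerSeries (PowerSeries ℚ)`, `y` the inner and `q` the outer variable), that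
`∑_{n≥0} χ_{-y}(S^n(W)) q^n = exp (∑_{m≥1} χ_{-y^m}(W) q^m / m)`.
The left-hand side has `q^n`-coefficient `∑_{s,t} (-1)^{s+t} dim S^n(W)_{s,t} y^s`
(the `t`-sum, a `tsum`, has finite support); the series inside `exp` has
`q^m`-coefficient `(1/m) χ_{-y^m}(W) = (1/m) ∑_{(s,t)} (-1)^{s+t} h^{s,t} y^{ms}`
for `m ≥ 1` and zero constant term, and `pexp` below computes the exponential
`∑_j f^j / j!` of a power series `f` with zero constant term (its `q^n`
coefficient being the finite sum `∑_{j≤n} coeff_n (f^j) / j!`).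
-/

open PowerSeries Finset

/-- Dimension of the bidegree-`e` component of the `n`-th graded symmetric power of a
bigraded vector space whose bidegree-`p` component has dimension `h p`. -/
noncomputable def sDim2 (h : ℕ × ℕ →₀ ℕ) (n : ℕ) (e : ℕ × ℕ) : ℕ :=
  Nat.card {m : (Σ p : ℕ × ℕ, Fin (h p)) →₀ ℕ //
    (∀ v, Odd (v.1.1 + v.1.2) → m v ≤ 1) ∧ (m.sum fun _ k => k) = n ∧
      (m.sum fun v k => k • v.1) = e}

/-- The exponential of a formal power series (with zero constant term) over a
`ℚ`-algebra: `pexp f = ∑_{j≥0} f^j / j!`, defined coefficientwise by the finite sum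
`coeff n (pexp f) = ∑_{j ≤ n} coeff n (f^j) / j!`. -/
noncomputable def pexp {R : Type*} [CommRing R] [Algebra ℚ R] (f : PowerSeries R) :
    PowerSeries R :=
  PowerSeries.mk fun n =>
    ∑ j ∈ Finset.range (n + 1),
      algebraMap ℚ R (1 / j.factorial) * PowerSeries.coeff n (f ^ j)

/-- `χ_{-y^m}(W) = ∑_{(s,t)} (-1)^{s+t} h^{s,t}(W) y^{ms}` as an element of `ℚ[[y]]`. -/
noncomputable def chiPoly (h : ℕ × ℕ →₀ ℕ) (m : ℕ) : PowerSeries ℚ :=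
  ∑ p ∈ h.support,
    ((-1 : ℚ) ^ (p.1 + p.2) * (h p : ℚ)) • (PowerSeries.X : PowerSeries ℚ) ^ (m * p.1)

/-!
Over a `ℚ`-algebra `pexp f` is the substitution of `f` into `exp`, so the chain rule gives
`(pexp f)' = pexp f · f'`; uniqueness for this differential equation makes `pexp` turn sums into
products. Choosing a homogeneous basis of `W`, the series `∑_m χ_{-y^m}(W) q^m / m` is the sum
over basis vectors `v` of bidegree `(s, t)` of `(-1)^(s+t) · (-log (1 - y^s q))`, so its
exponential is `∏_v (1 - y^s q)^{-(-1)^(s+t)}`: a geometric series for even `v` and `1 - y^s q`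
for odd `v`. Expanding the product, the `q^n`-coefficient is a sum over the monomials of degree
`n` in which odd vectors occur at most once, i.e. over a basis of `S^n(W)`, each contributing
`(-1)^(s+t) y^s` for its bidegree `(s, t)`; this is `χ_{-y}(S^n(W))`.
-/

section Exponential

variable {R : Type*} [CommRing R] [Algebra ℚ R]

attribute [local instance] IsAddTorsionFree.of_module_rat

lemma pexp_eq_subst_exp {f : R⟦X⟧} (hf : constantCoeff f = 0) : pexp f = (exp R).subst f := by
  ext n
  rw [coeff_subst' (HasSubst.of_constantCoeff_zero' hf), finsum_eq_sum_of_support_subset _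
    (s := range (n + 1)) fun j hj => ?_]
  · simp [pexp]
  · have hf' : X ^ j ∣ f ^ j := pow_dvd_pow_of_dvd (X_dvd_iff.mpr hf) j
    by_contra hjn
    exact hj (by simp only [X_pow_dvd_iff.mp hf' n (by simpa using hjn), smul_zero])

lemma constantCoeff_pexp (f : R⟦X⟧) : constantCoeff (pexp f) = 1 := by
  rw [← coeff_zero_eq_constantCoeff_apply]
  simp [pexp]

lemma derivative_pexp {f : R⟦X⟧} (hf : constantCoeff f = 0) :
    d⁄dX R (pexp f) = pexp f * d⁄dX R f := by
  rw [pexp_eq_subst_exp hf, derivative_subst (HasSubst.of_constantCoeff_zero' hf), derivative_exp]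

lemma pexp_mul_pexp_neg {f : R⟦X⟧} (hf : constantCoeff f = 0) : pexp f * pexp (-f) = 1 := by
  have hf' : constantCoeff (-f) = 0 := by rw [map_neg, hf, neg_zero]
  refine derivative.ext ?_ (by simp [constantCoeff_pexp])
  rw [Derivation.leibniz, derivative_pexp hf, derivative_pexp hf', map_neg, derivative_one,
    smul_eq_mul, smul_eq_mul]
  ring

lemma eq_pexp_of_derivative_eq_mul {F f : R⟦X⟧} (hf : constantCoeff f = 0)
    (hF : d⁄dX R F = F * d⁄dX R f) (hF₀ : constantCoeff F = 1) : F = pexp f := by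
  have hf' : constantCoeff (-f) = 0 := by rw [map_neg, hf, neg_zero]
  have key : F * pexp (-f) = 1 := by
    refine derivative.ext ?_ (by simp [constantCoeff_pexp, hF₀])
    rw [Derivation.leibniz, derivative_pexp hf', hF, map_neg, derivative_one,
      smul_eq_mul, smul_eq_mul]
    ring
  calc F = F * (pexp (-f) * pexp (-(-f))) := by rw [pexp_mul_pexp_neg hf', mul_one]
    _ = pexp f := by rw [← mul_assoc, key, one_mul, neg_neg]

lemma pexp_zero : pexp (0 : R⟦X⟧) = 1 :=
  (eq_pexp_of_derivative_eq_mul (map_zero _) (by simp) (map_one _)).symm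

lemma pexp_add {f g : R⟦X⟧} (hf : constantCoeff f = 0) (hg : constantCoeff g = 0) :
    pexp (f + g) = pexp f * pexp g := by
  refine (eq_pexp_of_derivative_eq_mul (by rw [map_add, hf, hg, add_zero]) ?_ ?_).symm
  · rw [Derivation.leibniz, derivative_pexp hf, derivative_pexp hg, map_add, smul_eq_mul,
      smul_eq_mul]
    ring
  · rw [map_mul, constantCoeff_pexp, constantCoeff_pexp, mul_one]

lemma pexp_sum {ι : Type*} (s : Finset ι) (f : ι → R⟦X⟧)
    (hf : ∀ i ∈ s, constantCoeff (f i) = 0) :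
    pexp (∑ i ∈ s, f i) = ∏ i ∈ s, pexp (f i) := by
  classical
  induction s using Finset.induction_on with
  | empty => exact pexp_zero
  | insert a s ha ih =>
    have hs : ∀ i ∈ s, constantCoeff (f i) = 0 := fun i hi => hf i (mem_insert_of_mem hi)
    rw [sum_insert ha, prod_insert ha, pexp_add (hf a (mem_insert_self a s))
      (by rw [map_sum]; exact sum_eq_zero hs), ih hs]

end Exponential

lemma rescale_mk_one_mul_one_sub {R : Type*} [CommRing R] (c : R) :
    rescale c (mk 1) * (1 - C c * X) = 1 := by
  rw [← rescale_X, ← map_one (rescale c), ← map_sub, ← map_mul, mk_one_mul_one_sub_eq_one]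

section NegLogOneSub

variable {R : Type*} [CommRing R] [Algebra ℚ R]

/-- `-log (1 - c X) = ∑_{m ≥ 1} c^m X^m / m`; the `m = 0` term vanishes as `(0 : ℚ)⁻¹ = 0`. -/
noncomputable def negLogOneSub (c : R) : R⟦X⟧ :=
  mk fun m => (m : ℚ)⁻¹ • c ^ m

lemma constantCoeff_negLogOneSub (c : R) : constantCoeff (negLogOneSub c) = 0 := by
  rw [← coeff_zero_eq_constantCoeff_apply, negLogOneSub, coeff_mk, Nat.cast_zero, inv_zero,
    zero_smul]

lemma derivative_negLogOneSub (c : R) : d⁄dX R (negLogOneSub c) = C c * rescale c (mk 1) := by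
  ext n
  have hn : ((n + 1 : ℕ) : ℚ) ≠ 0 := Nat.cast_ne_zero.mpr n.succ_ne_zero
  rw [coeff_derivative, negLogOneSub, coeff_mk, coeff_C_mul, coeff_rescale, coeff_mk,
    Pi.one_apply, mul_one, ← pow_succ', ← Nat.cast_add_one, ← nsmul_eq_mul',
    ← Nat.cast_smul_eq_nsmul ℚ, smul_smul, mul_inv_cancel₀ hn, one_smul]

lemma pexp_neg_negLogOneSub (c : R) : pexp (-negLogOneSub c) = 1 - C c * X := by
  refine (eq_pexp_of_derivative_eq_mul (by rw [map_neg, constantCoeff_negLogOneSub, neg_zero])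
    ?_ (by simp)).symm
  rw [map_neg, derivative_negLogOneSub, map_sub, derivative_one, Derivation.leibniz,
    derivative_C, derivative_X, smul_zero, add_zero, smul_eq_mul, mul_one, zero_sub,
    mul_neg, mul_left_comm, mul_comm _ (rescale c _), rescale_mk_one_mul_one_sub, mul_one]

lemma pexp_negLogOneSub (c : R) : pexp (negLogOneSub c) = rescale c (mk 1) := by
  calc pexp (negLogOneSub c)
      = pexp (negLogOneSub c) * (rescale c (mk 1) * (1 - C c * X)) := by
        rw [rescale_mk_one_mul_one_sub, mul_one]
    _ = rescale c (mk 1) * (pexp (negLogOneSub c) * pexp (-negLogOneSub c)) := by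
        rw [pexp_neg_negLogOneSub]; ring
    _ = rescale c (mk 1) := by
        rw [pexp_mul_pexp_neg (constantCoeff_negLogOneSub c), mul_one]

lemma coeff_pexp_neg_one_pow_smul_negLogOneSub (k : ℕ) (c : R) (j : ℕ) :
    coeff j (pexp (((-1 : ℚ) ^ k) • negLogOneSub c)) =
      if Odd k ∧ 2 ≤ j then 0 else ((-1 : ℚ) ^ (k * j)) • c ^ j := by
  rcases Nat.even_or_odd k with hk | hk
  · rw [hk.neg_one_pow, one_smul, pexp_negLogOneSub, coeff_rescale, coeff_mk, Pi.one_apply,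
      mul_one, if_neg (fun h => Nat.not_odd_iff_even.mpr hk h.1), (hk.mul_right j).neg_one_pow,
      one_smul]
  · rw [hk.neg_one_pow, neg_one_smul, pexp_neg_negLogOneSub, map_sub, coeff_C_mul, coeff_one]
    match j with
    | 0 => simp
    | 1 => simp [hk.neg_one_pow]
    | j + 2 => simp [coeff_X, hk]

end NegLogOneSub

/-- The contribution `(-1)^(s+t) y^s` of a vector of bidegree `(s, t)` to `χ_{-y}`. -/
noncomputable def chiMonomial (e : ℕ × ℕ) : ℚ⟦X⟧ :=
  ((-1 : ℚ) ^ (e.1 + e.2)) • X ^ e.1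

lemma chiMonomial_zero : chiMonomial 0 = 1 := by
  simp [chiMonomial]

lemma chiMonomial_add (e e' : ℕ × ℕ) :
    chiMonomial (e + e') = chiMonomial e * chiMonomial e' := by
  simp only [chiMonomial, Prod.fst_add, Prod.snd_add, smul_mul_smul_comm, ← pow_add]
  ring_nf

lemma chiMonomial_sum {ι : Type*} (s : Finset ι) (e : ι → ℕ × ℕ) :
    chiMonomial (∑ i ∈ s, e i) = ∏ i ∈ s, chiMonomial (e i) := by
  classical
  induction s using Finset.induction_on with
  | empty => exact chiMonomial_zero
  | insert a s ha ih => rw [sum_insert ha, prod_insert ha, chiMonomial_add, ih]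

lemma coeff_chiMonomial (e : ℕ × ℕ) (s : ℕ) :
    coeff s (chiMonomial e) = if e.1 = s then (-1 : ℚ) ^ (s + e.2) else 0 := by
  rw [chiMonomial, coeff_smul, coeff_X_pow]
  split_ifs with h₁ h₂ h₂ <;> simp_all

lemma mk_tsum_card_eq_sum_chiMonomial {α : Type*} (M : Finset α) (w : α → ℕ × ℕ) :
    (mk fun s => ∑' t : ℕ, (-1 : ℚ) ^ (s + t) * (#{x ∈ M | w x = (s, t)} : ℚ)) =
      ∑ x ∈ M, chiMonomial (w x) := by
  ext s
  have hx : ∀ x ∈ M, ∑' t : ℕ, (if w x = (s, t) then (-1 : ℚ) ^ (s + t) else 0) =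
      coeff s (chiMonomial (w x)) := by
    intro x _
    rw [tsum_eq_single (w x).2 fun t ht => if_neg fun h => ht (congrArg Prod.snd h).symm,
      coeff_chiMonomial]
    exact if_congr (by simp [Prod.ext_iff]) rfl rfl
  simp only [coeff_mk, card_filter, Nat.cast_sum, Nat.cast_ite, Nat.cast_one, Nat.cast_zero,
    mul_sum, mul_ite, mul_one, mul_zero, map_sum]
  rw [Summable.tsum_finsetSum fun x _ => summable_of_ne_finset_zero (s := {(w x).2})
    fun t ht => if_neg fun h => ht (mem_singleton.mpr (congrArg Prod.snd h).symm)]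
  exact sum_congr rfl hx

namespace ChiGenus

open scoped Classical

variable (h : ℕ × ℕ →₀ ℕ)

/-- `⟨p, i⟩` is the `i`-th vector of a basis of `W_p`. -/
abbrev BasisVec : Type := Σ p : ℕ × ℕ, Fin (h p)

def basisVecs : Finset (BasisVec h) :=
  h.support.sigma fun _ => univ

variable {h}

lemma mem_basisVecs (v : BasisVec h) : v ∈ basisVecs h := by
  simp only [basisVecs, mem_sigma, Finsupp.mem_support_iff, mem_univ, and_true]
  exact v.2.pos.ne'

def bidegree (ℓ : BasisVec h →₀ ℕ) : ℕ × ℕ :=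
  ℓ.sum fun v k => k • v.1

lemma bidegree_eq_sum (ℓ : BasisVec h →₀ ℕ) :
    bidegree ℓ = ∑ v ∈ basisVecs h, ℓ v • v.1 :=
  Finsupp.sum_of_support_subset ℓ (fun v _ => mem_basisVecs v) _ fun _ _ => zero_smul _ _

def IsGradedSymMonomial (ℓ : BasisVec h →₀ ℕ) : Prop :=
  ∀ v, Odd (v.1.1 + v.1.2) → ℓ v ≤ 1

variable (h)

/-- The monomial basis of `S^n(W)`. -/
noncomputable def monomials (n : ℕ) : Finset (BasisVec h →₀ ℕ) :=
  {ℓ ∈ (basisVecs h).finsuppAntidiag n | IsGradedSymMonomial ℓ}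

lemma sDim2_eq_card (n : ℕ) (e : ℕ × ℕ) :
    sDim2 h n e = #{ℓ ∈ monomials h n | bidegree ℓ = e} := by
  rw [sDim2, ← Nat.card_eq_finsetCard]
  refine Nat.card_congr (Equiv.subtypeEquivRight fun ℓ => ?_)
  rw [monomials, filter_filter, mem_filter, mem_finsuppAntidiag,
    Finsupp.sum_of_support_subset ℓ (fun v _ => mem_basisVecs v) _ fun _ _ => rfl]
  exact ⟨fun ⟨hℓ, hn, he⟩ => ⟨⟨hn, fun v _ => mem_basisVecs v⟩, hℓ, he⟩,
    fun ⟨⟨hn, _⟩, hℓ, he⟩ => ⟨hℓ, hn, he⟩⟩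

lemma mk_chi_sDim2_eq_sum_monomials (n : ℕ) :
    (mk fun s => ∑' t : ℕ, (-1 : ℚ) ^ (s + t) * (sDim2 h n (s, t) : ℚ)) =
      ∑ ℓ ∈ monomials h n, chiMonomial (bidegree ℓ) := by
  simp only [sDim2_eq_card]
  exact mk_tsum_card_eq_sum_chiMonomial _ _

/-- The summand of `log ∑ χ_{-y}(S^n W) q^n` coming from a single basis vector of `W`. -/
noncomputable def logFactor (v : BasisVec h) : ℚ⟦X⟧⟦X⟧ :=
  ((-1 : ℚ) ^ (v.1.1 + v.1.2)) • negLogOneSub (X ^ v.1.1)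

lemma mk_chiPoly_eq_sum_logFactor :
    (mk fun m => if m = 0 then 0 else (m : ℚ)⁻¹ • chiPoly h m : ℚ⟦X⟧⟦X⟧) =
      ∑ v ∈ basisVecs h, logFactor h v := by
  ext m : 1
  have hv : ∀ v : BasisVec h, coeff m (logFactor h v) =
      ((m : ℚ)⁻¹ * (-1 : ℚ) ^ (v.1.1 + v.1.2)) • X ^ (m * v.1.1) := by
    intro v
    rw [logFactor, coeff_smul, negLogOneSub, coeff_mk, smul_smul, ← pow_mul, mul_comm v.1.1,
      mul_comm]
  rw [coeff_mk, map_sum, sum_congr rfl fun v _ => hv v, basisVecs, sum_sigma]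
  split_ifs with hm
  · simp [hm]
  · rw [chiPoly, smul_sum]
    refine sum_congr rfl fun p _ => ?_
    simp only [sum_const, card_univ, Fintype.card_fin]
    rw [← Nat.cast_smul_eq_nsmul ℚ, smul_smul, smul_smul]
    ring_nf

lemma constantCoeff_logFactor (v : BasisVec h) : constantCoeff (logFactor h v) = 0 := by
  rw [← coeff_zero_eq_constantCoeff_apply, logFactor, coeff_smul,
    coeff_zero_eq_constantCoeff_apply, constantCoeff_negLogOneSub, smul_zero]

lemma coeff_pexp_logFactor (v : BasisVec h) (k : ℕ) :
    coeff k (pexp (logFactor h v)) =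
      if Odd (v.1.1 + v.1.2) ∧ 2 ≤ k then 0 else chiMonomial (k • v.1) := by
  rw [logFactor, coeff_pexp_neg_one_pow_smul_negLogOneSub, chiMonomial]
  simp only [Prod.smul_fst, Prod.smul_snd, smul_eq_mul, ← pow_mul]
  ring_nf

lemma prod_coeff_pexp_logFactor (ℓ : BasisVec h →₀ ℕ) :
    ∏ v ∈ basisVecs h, coeff (ℓ v) (pexp (logFactor h v)) =
      if IsGradedSymMonomial ℓ then chiMonomial (bidegree ℓ) else 0 := by
  simp only [coeff_pexp_logFactor]
  split_ifs with hℓ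
  · rw [bidegree_eq_sum, chiMonomial_sum]
    exact prod_congr rfl fun v _ => if_neg fun ⟨hv, h2⟩ => by have := hℓ v hv; omega
  · obtain ⟨v, hv, h2⟩ : ∃ v, Odd (v.1.1 + v.1.2) ∧ 1 < ℓ v := by
      simpa [IsGradedSymMonomial] using hℓ
    exact prod_eq_zero (mem_basisVecs v) (if_pos ⟨hv, h2⟩)

end ChiGenus

open ChiGenus in
theorem chi_y_genus_symmetric_products (h : ℕ × ℕ →₀ ℕ) :
    (PowerSeries.mk fun n => PowerSeries.mk fun s =>
        ∑' t : ℕ, (-1 : ℚ) ^ (s + t) * (sDim2 h n (s, t) : ℚ)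
      : PowerSeries (PowerSeries ℚ)) =
      pexp (PowerSeries.mk fun m =>
        if m = 0 then 0 else (m : ℚ)⁻¹ • chiPoly h m) := by
  classical
  rw [mk_chiPoly_eq_sum_logFactor, pexp_sum _ _ fun v _ => constantCoeff_logFactor h v]
  ext n : 1
  rw [coeff_mk, mk_chi_sDim2_eq_sum_monomials, coeff_prod, monomials, sum_filter]
  exact sum_congr rfl fun ℓ _ => (prod_coeff_pexp_logFactor h ℓ).symm
end
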